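/- For any integer r ≥ 2, any function f : {0,1,…,r−1}ⁿ → ℝ and any k = 1,…,n, one has ‖ Σ_{S : |S| ≤ k} f̂(S)·u_S ‖₄ ≤ C_r^k · ( Σ_{S : |S| ≤ k} |f̂(S)|² )^{1/2}, where C_r = (9/2)·r³. -/

import Mathlib

open scoped Classical
open Finset

/-- Probability of an event under the uniform distribution on `{0,1,…,r-1}ⁿ`. -/
noncomputable def prr {n r : ℕ} (P : (Fin n → Fin r) → Prop) : ℝ :=
  ((Finset.univ.filter P).card : ℝ) / r ^ n

/-- Expectation of `g(X)` for `X` uniform on `{0,1,…,r-1}ⁿ`. -/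
noncomputable def expecr {n r : ℕ} (g : (Fin n → Fin r) → ℝ) : ℝ :=
  (∑ x, g x) / r ^ n

/-- Variance of `g(X)` for `X` uniform on `{0,1,…,r-1}ⁿ`. -/
noncomputable def varr {n r : ℕ} (g : (Fin n → Fin r) → ℝ) : ℝ :=
  expecr fun x => (g x - expecr g) ^ 2

/-- The `α`-quantile of `f(X)`. -/
noncomputable def quantr {n r : ℕ} (f : (Fin n → Fin r) → ℝ) (α : ℝ) : ℝ :=
  sInf {z : ℝ | α ≤ prr fun x => f x ≤ z}

/-- `Δᵢ f(x) = f(x) - (1/r) ∑_{j=0}^{r-1} f(x_{i,j})` where `x_{i,j}` replaces the `i`-th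
coordinate of `x` by `x_i ⊕ j` (addition modulo `r`). -/
noncomputable def Δi {n r : ℕ} (f : (Fin n → Fin r) → ℝ) (i : Fin n)
    (x : Fin n → Fin r) : ℝ :=
  f x - (1 / r) * ∑ j : Fin r, f (Function.update x i (x i + j))

/-- `ω = e^{2πi/r}`. -/
noncomputable def omg (r : ℕ) : ℂ := Complex.exp (2 * Real.pi * Complex.I / r)

/-- The character `u_S(x) = ω^{⟨S,x⟩}` with `⟨S,x⟩ = ∑ᵢ Sᵢxᵢ mod r`. -/
noncomputable def uS {n r : ℕ} (S x : Fin n → Fin r) : ℂ :=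
  omg r ^ ((∑ i, (S i).val * (x i).val) % r)

/-- `∫ g = r^{-n} ∑_x g(x)`. -/
noncomputable def intg {n r : ℕ} (g : (Fin n → Fin r) → ℂ) : ℂ :=
  (∑ x, g x) / r ^ n

/-- Fourier coefficient `ĝ(S) = ∫ g ⋅ conj(u_S)`. -/
noncomputable def fhat {n r : ℕ} (g : (Fin n → Fin r) → ℂ) (S : Fin n → Fin r) : ℂ :=
  intg fun x => g x * (starRingEnd ℂ) (uS S x)

/-- `‖g‖_q = (∫ |g|^q)^{1/q}`. -/
noncomputable def Lnorm {n r : ℕ} (q : ℝ) (g : (Fin n → Fin r) → ℂ) : ℝ :=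
  ((∑ x, ‖g x‖ ^ q) / r ^ n) ^ (1 / q)

/-- `|S|`: the number of nonzero components of `S`. -/
noncomputable def suppCard {n r : ℕ} [NeZero r] (S : Fin n → Fin r) : ℕ :=
  (Finset.univ.filter fun i => S i ≠ 0).card

/-! Write `g = ∑_S a_S u_S` with `a` supported on `|S| ≤ k`. Since `u_S u_T = u_{S+T}`, Parseval
turns `‖g‖₄⁴ = ‖g²‖₂²` into `∑_V |(a ∗ a)(V)|²`, which is at most the same sum for `b = |a|`.
For fixed `V` with support `U`, split each `S` into its restriction `w` to `U` and a part off `U`;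
Cauchy–Schwarz on each fibre and then over the at most `r^|U|` values of `w` gives
`(b ∗ b)(V)² ≤ r^|U| ∑_{A,B : (A+B)|_U = V} b_A² b_B²`. Summing over `V`, a pair `(A, B)` is
counted once for each `U ⊆ supp (A + B)`, a set of size at most `2k`. Hence
`‖g‖₄⁴ ≤ (r+1)^(2k) (∑ b²)²`, which is stronger than the claimed bound. -/

def selfConv {A R : Type*} [AddGroup A] [Fintype A] [Semiring R] (b : A → R) (V : A) : R :=
  ∑ S, b S * b (V - S)

lemma norm_selfConv_le {A R : Type*} [AddGroup A] [Fintype A] [SeminormedRing R]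
    (a : A → R) (V : A) : ‖selfConv a V‖ ≤ selfConv (fun S => ‖a S‖) V :=
  (norm_sum_le _ _).trans (sum_le_sum fun _ _ => norm_mul_le _ _)

lemma isPrimitiveRoot_omg (r : ℕ) [NeZero r] : IsPrimitiveRoot (omg r) r := by
  simpa [omg] using Complex.isPrimitiveRoot_exp r (NeZero.ne r)

section Characters

variable {n r : ℕ} [NeZero r]

lemma uS_eq_pow (S x : Fin n → Fin r) : uS S x = omg r ^ ∑ i, (S i).val * (x i).val :=
  (pow_eq_pow_mod _ (isPrimitiveRoot_omg r).pow_eq_one).symm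

lemma omg_pow_eq_of_modEq {a b : ℕ} (h : a ≡ b [MOD r]) : omg r ^ a = omg r ^ b := by
  have hr := (isPrimitiveRoot_omg r).pow_eq_one
  rw [pow_eq_pow_mod a hr, pow_eq_pow_mod b hr, h]

lemma norm_uS (S x : Fin n → Fin r) : ‖uS S x‖ = 1 := by
  rw [uS_eq_pow, norm_pow, omg, Complex.norm_exp]
  simp

lemma uS_add_left (S T x : Fin n → Fin r) : uS (S + T) x = uS S x * uS T x := by
  simp only [uS_eq_pow, ← pow_add, ← sum_add_distrib, ← add_mul]
  refine omg_pow_eq_of_modEq ?_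
  rw [← ZMod.natCast_eq_natCast_iff]
  push_cast [Pi.add_apply, Fin.val_add, ZMod.natCast_mod]
  rfl

lemma conj_uS (S x : Fin n → Fin r) : (starRingEnd ℂ) (uS S x) = uS (-S) x := by
  have hinv : uS S x * uS (-S) x = 1 := by
    rw [← uS_add_left, add_neg_cancel, uS_eq_pow]; simp
  rw [← inv_eq_of_mul_eq_one_right hinv, Complex.inv_def, Complex.normSq_eq_norm_sq, norm_uS]
  simp

lemma sum_uS (S : Fin n → Fin r) :
    ∑ x : Fin n → Fin r, uS S x = if S = 0 then (r : ℂ) ^ n else 0 := by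
  have hprod : ∑ x : Fin n → Fin r, uS S x = ∏ i, ∑ j : Fin r, (omg r ^ (S i).val) ^ j.val := by
    rw [prod_univ_sum, Fintype.piFinset_univ]
    refine sum_congr rfl fun x _ => ?_
    simp only [uS_eq_pow, ← pow_mul, prod_pow_eq_pow_sum]
  rw [hprod]
  split_ifs with hS
  · simp [hS]
  obtain ⟨i, hi⟩ := Function.ne_iff.mp hS
  refine prod_eq_zero (mem_univ i) ?_
  have hne : omg r ^ (S i).val ≠ 1 := fun h =>
    hi (Fin.ext (Nat.eq_zero_of_dvd_of_lt ((isPrimitiveRoot_omg r).dvd_of_pow_eq_one _ h)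
      (S i).isLt))
  have hpow : (omg r ^ (S i).val) ^ r = 1 := by
    rw [← pow_mul, mul_comm, pow_mul, (isPrimitiveRoot_omg r).pow_eq_one, one_pow]
  rw [Fin.sum_univ_eq_sum_range (fun j => (omg r ^ (S i).val) ^ j), geom_sum_eq hne, hpow]
  simp

lemma sum_norm_sum_mul_uS_sq (c : (Fin n → Fin r) → ℂ) :
    ∑ x : Fin n → Fin r, ‖∑ V, c V * uS V x‖ ^ 2 = r ^ n * ∑ V, ‖c V‖ ^ 2 := by
  rw [← Complex.ofReal_inj]
  push_cast
  simp_rw [← Complex.mul_conj', map_sum, map_mul, conj_uS, sum_mul_sum]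
  rw [sum_comm, mul_sum]
  refine sum_congr rfl fun V _ => ?_
  rw [sum_comm]
  have hterm : ∀ W x, c V * uS V x * ((starRingEnd ℂ) (c W) * uS (-W) x)
      = c V * (starRingEnd ℂ) (c W) * uS (V - W) x := fun W x => by
    rw [sub_eq_add_neg, uS_add_left]; ring
  simp_rw [hterm, ← mul_sum, sum_uS, sub_eq_zero, mul_ite, mul_zero,
    sum_ite_eq, mem_univ, if_true]
  ring

lemma sum_mul_uS_sq (a : (Fin n → Fin r) → ℂ) (x : Fin n → Fin r) :
    (∑ S, a S * uS S x) ^ 2 = ∑ V, selfConv a V * uS V x := by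
  calc (∑ S, a S * uS S x) ^ 2 = ∑ S, ∑ T, a S * a T * uS (S + T) x := by
        simp_rw [sq, sum_mul_sum, uS_add_left, mul_mul_mul_comm]
    _ = ∑ S, ∑ V, a S * a (V - S) * uS V x := by
        refine sum_congr rfl fun S _ => ?_
        rw [← (Equiv.subRight S).sum_comp]
        simp only [Equiv.subRight_apply, add_sub_cancel]
    _ = ∑ V, selfConv a V * uS V x := by
        rw [sum_comm]
        simp_rw [selfConv, sum_mul]

lemma sum_norm_sum_mul_uS_pow_four (a : (Fin n → Fin r) → ℂ) :
    ∑ x : Fin n → Fin r, ‖∑ S, a S * uS S x‖ ^ 4 = r ^ n * ∑ V, ‖selfConv a V‖ ^ 2 := by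
  simp_rw [show ∀ z : ℂ, ‖z‖ ^ 4 = ‖z ^ 2‖ ^ 2 by intro z; rw [norm_pow, ← pow_mul],
    sum_mul_uS_sq]
  exact sum_norm_sum_mul_uS_sq _

end Characters

section Combinatorics

variable {ι G : Type*} [Fintype ι] [AddCommGroup G] [DecidableEq G]

def coordSupport (S : ι → G) : Finset ι := univ.filter fun i => S i ≠ 0

lemma mem_coordSupport {S : ι → G} {i : ι} : i ∈ coordSupport S ↔ S i ≠ 0 := by
  simp [coordSupport]

lemma indicator_coordSupport (V : ι → G) : (coordSupport V : Set ι).indicator V = V := by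
  ext i
  by_cases hi : V i = 0 <;> simp [mem_coordSupport, hi]

lemma coordSupport_indicator {C : ι → G} {U : Finset ι} (hU : U ⊆ coordSupport C) :
    coordSupport ((U : Set ι).indicator C) = U := by
  ext i
  by_cases hi : i ∈ U
  · simpa [mem_coordSupport, hi] using mem_coordSupport.mp (hU hi)
  · simp [mem_coordSupport, hi]

variable [DecidableEq ι]

lemma coordSupport_add_subset (A B : ι → G) :
    coordSupport (A + B) ⊆ coordSupport A ∪ coordSupport B := by
  intro i
  simp only [mem_union, mem_coordSupport, Pi.add_apply]
  contrapose!
  rintro ⟨hA, hB⟩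
  simp [hA, hB]

variable [Fintype G]

lemma sum_card_pow_coordSupport_le (C : ι → G) :
    ∑ V ∈ univ.filter (fun V : ι → G => (coordSupport V : Set ι).indicator C = V),
      (Fintype.card G : ℝ) ^ #(coordSupport V) ≤ (Fintype.card G + 1) ^ #(coordSupport C) := by
  have hsub : univ.filter (fun V : ι → G => (coordSupport V : Set ι).indicator C = V) ⊆
      (coordSupport C).powerset.image fun U : Finset ι => (U : Set ι).indicator C := by
    intro V hV
    have hV := (mem_filter.mp hV).2
    refine mem_image.mpr ⟨coordSupport V, mem_powerset.mpr fun i hi => ?_, hV⟩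
    have hVi : V i = C i := (congrFun hV i).symm.trans (Set.indicator_of_mem (mem_coe.mpr hi) C)
    exact mem_coordSupport.mpr (hVi ▸ mem_coordSupport.mp hi)
  calc _ ≤ ∑ V ∈ (coordSupport C).powerset.image fun U : Finset ι => (U : Set ι).indicator C,
          (Fintype.card G : ℝ) ^ #(coordSupport V) :=
        sum_le_sum_of_subset_of_nonneg hsub fun _ _ _ => by positivity
    _ ≤ ∑ U ∈ (coordSupport C).powerset,
          (Fintype.card G : ℝ) ^ #(coordSupport ((U : Set ι).indicator C)) :=
        sum_image_le_of_nonneg fun _ _ => by positivity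
    _ = ∑ U ∈ (coordSupport C).powerset,
          (Fintype.card G : ℝ) ^ #U * 1 ^ (#(coordSupport C) - #U) :=
        sum_congr rfl fun U hU => by
          rw [coordSupport_indicator (mem_powerset.mp hU), one_pow, mul_one]
    _ = _ := sum_pow_mul_eq_add_pow _ _ _

noncomputable def indicatorFiber (U : Finset ι) (w : ι → G) : Finset (ι → G) :=
  univ.filter fun S => (U : Set ι).indicator S = w

lemma sq_sum_indicatorFiber_le (b : (ι → G) → ℝ) (U : Finset ι) {V : ι → G}
    (hV : (U : Set ι).indicator V = V) (w : ι → G) :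
    (∑ S ∈ indicatorFiber U w, b S * b (V - S)) ^ 2 ≤
      (∑ S ∈ indicatorFiber U w, b S ^ 2) * ∑ S ∈ indicatorFiber U (V - w), b S ^ 2 := by
  refine (sum_mul_sq_le_sq_mul_sq _ _ _).trans_eq (congrArg _ ?_)
  refine sum_equiv (Equiv.subLeft V) (fun S => ?_) (fun S _ => rfl)
  simp only [indicatorFiber, mem_filter, mem_univ, true_and, Equiv.subLeft_apply,
    Set.indicator_sub', hV, sub_right_inj]

lemma sum_indicatorFiber_mul {R : Type*} [CommSemiring R] (β : (ι → G) → R) (U : Finset ι)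
    (V : ι → G) :
    ∑ w, (∑ S ∈ indicatorFiber U w, β S) * ∑ S ∈ indicatorFiber U (V - w), β S =
      ∑ A, ∑ B, if (U : Set ι).indicator (A + B) = V then β A * β B else 0 := by
  simp_rw [indicatorFiber, sum_filter, sum_mul_sum]
  rw [sum_comm]
  refine sum_congr rfl fun A _ => ?_
  rw [sum_comm]
  refine sum_congr rfl fun B _ => ?_
  simp_rw [ite_mul, zero_mul, sum_ite_eq, mem_univ, if_true, mul_ite, mul_zero,
    Set.indicator_add', eq_sub_iff_add_eq']

lemma selfConv_sq_le (b : (ι → G) → ℝ) (V : ι → G) :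
    selfConv b V ^ 2 ≤ (Fintype.card G : ℝ) ^ #(coordSupport V) * ∑ A, ∑ B,
      if (coordSupport V : Set ι).indicator (A + B) = V then b A ^ 2 * b B ^ 2 else 0 := by
  set U := coordSupport V
  set E : (ι → G) → ℝ := fun w => ∑ S ∈ indicatorFiber U w, b S ^ 2
  let W : Finset (ι → G) := Fintype.piFinset fun i => if i ∈ U then univ else {0}
  have hW : (#W : ℝ) = (Fintype.card G : ℝ) ^ #U := by
    simp [W, Fintype.card_piFinset, apply_ite Finset.card, prod_ite_mem]
  have hmaps : ∀ S ∈ (univ : Finset (ι → G)), (U : Set ι).indicator S ∈ W := by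
    intro S _
    rw [Fintype.mem_piFinset]
    intro i
    by_cases hi : i ∈ U <;> simp [hi]
  have hE : ∀ w, 0 ≤ E w := fun w => sum_nonneg fun _ _ => sq_nonneg _
  calc selfConv b V ^ 2 = (∑ w ∈ W, ∑ S ∈ indicatorFiber U w, b S * b (V - S)) ^ 2 := by
        rw [selfConv, ← sum_fiberwise_of_maps_to hmaps]
        rfl
    _ ≤ #W * ∑ w ∈ W, (∑ S ∈ indicatorFiber U w, b S * b (V - S)) ^ 2 :=
        sq_sum_le_card_mul_sum_sq
    _ ≤ #W * ∑ w ∈ W, E w * E (V - w) := by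
        gcongr with w
        exact sq_sum_indicatorFiber_le b U (indicator_coordSupport V) w
    _ ≤ #W * ∑ w, E w * E (V - w) :=
        mul_le_mul_of_nonneg_left (sum_le_univ_sum_of_nonneg fun w => mul_nonneg (hE _) (hE _))
          (Nat.cast_nonneg _)
    _ = _ := by rw [hW, sum_indicatorFiber_mul]

lemma sum_sq_selfConv_le (b : (ι → G) → ℝ) :
    ∑ V, selfConv b V ^ 2 ≤
      ∑ A, ∑ B, ((Fintype.card G : ℝ) + 1) ^ #(coordSupport (A + B)) * (b A ^ 2 * b B ^ 2) := by
  calc ∑ V, selfConv b V ^ 2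
      ≤ ∑ V, (Fintype.card G : ℝ) ^ #(coordSupport V) * ∑ A, ∑ B,
          if (coordSupport V : Set ι).indicator (A + B) = V then b A ^ 2 * b B ^ 2 else 0 :=
        sum_le_sum fun V _ => selfConv_sq_le b V
    _ = ∑ A, ∑ B, (∑ V ∈ univ.filter
          (fun V : ι → G => (coordSupport V : Set ι).indicator (A + B) = V),
          (Fintype.card G : ℝ) ^ #(coordSupport V)) * (b A ^ 2 * b B ^ 2) := by
        simp_rw [mul_sum, sum_filter, sum_mul, ite_mul, zero_mul, mul_ite, mul_zero]
        rw [sum_comm]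
        refine sum_congr rfl fun A _ => ?_
        rw [sum_comm]
    _ ≤ _ := by
        gcongr with A _ B _
        exact sum_card_pow_coordSupport_le (A + B)

lemma sum_sq_selfConv_le_of_card_coordSupport_le (b : (ι → G) → ℝ) {k : ℕ}
    (hb : ∀ S, b S ≠ 0 → #(coordSupport S) ≤ k) :
    ∑ V, selfConv b V ^ 2 ≤ ((Fintype.card G : ℝ) + 1) ^ (2 * k) * (∑ S, b S ^ 2) ^ 2 := by
  have hterm : ∀ A B : ι → G,
      ((Fintype.card G : ℝ) + 1) ^ #(coordSupport (A + B)) * (b A ^ 2 * b B ^ 2) ≤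
        ((Fintype.card G : ℝ) + 1) ^ (2 * k) * (b A ^ 2 * b B ^ 2) := by
    intro A B
    rcases eq_or_ne (b A) 0 with hA | hA
    · simp [hA]
    rcases eq_or_ne (b B) 0 with hB | hB
    · simp [hB]
    gcongr
    · exact le_add_of_nonneg_left (Nat.cast_nonneg _)
    · calc #(coordSupport (A + B)) ≤ #(coordSupport A ∪ coordSupport B) :=
            card_le_card (coordSupport_add_subset A B)
        _ ≤ #(coordSupport A) + #(coordSupport B) := card_union_le _ _
        _ ≤ 2 * k := by linarith [hb A hA, hb B hB]
  refine (sum_sq_selfConv_le b).trans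
    ((sum_le_sum fun A _ => sum_le_sum fun B _ => hterm A B).trans_eq ?_)
  simp_rw [sq (∑ S, b S ^ 2), sum_mul_sum, mul_sum]

end Combinatorics

lemma Lnorm_le_of_sum_pow_le {n r : ℕ} [NeZero r] {q : ℕ} (hq : q ≠ 0) {R : ℝ} (hR : 0 ≤ R)
    (g : (Fin n → Fin r) → ℂ) (h : ∑ x, ‖g x‖ ^ q ≤ r ^ n * R ^ q) : Lnorm q g ≤ R := by
  rw [Lnorm]
  simp_rw [Real.rpow_natCast]
  calc _ ≤ (R ^ q) ^ (1 / (q : ℝ)) := by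
        refine Real.rpow_le_rpow (by positivity) ?_ (by positivity)
        rwa [div_le_iff₀ (pow_pos (Nat.cast_pos.mpr (NeZero.pos r)) n), mul_comm]
    _ = R := by
        rw [← Real.rpow_natCast, ← Real.rpow_mul hR, mul_one_div_cancel (by exact_mod_cast hq),
          Real.rpow_one]

lemma sum_norm_sum_mul_uS_pow_four_le {n r : ℕ} [NeZero r] (a : (Fin n → Fin r) → ℂ) {k : ℕ}
    (ha : ∀ S, a S ≠ 0 → #(coordSupport S) ≤ k) :
    ∑ x, ‖∑ S, a S * uS S x‖ ^ 4 ≤ r ^ n * (((r : ℝ) + 1) ^ (2 * k) * (∑ S, ‖a S‖ ^ 2) ^ 2) :=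
  calc ∑ x, ‖∑ S, a S * uS S x‖ ^ 4 = r ^ n * ∑ V, ‖selfConv a V‖ ^ 2 :=
        sum_norm_sum_mul_uS_pow_four a
    _ ≤ r ^ n * ∑ V, selfConv (fun S => ‖a S‖) V ^ 2 := by
        gcongr with V
        exact norm_selfConv_le a V
    _ ≤ r ^ n * (((r : ℝ) + 1) ^ (2 * k) * (∑ S, ‖a S‖ ^ 2) ^ 2) := by
        gcongr
        simpa using sum_sq_selfConv_le_of_card_coordSupport_le _
          fun S hS => ha S (norm_ne_zero_iff.mp hS)

lemma add_one_pow_mul_sq_le {x M : ℝ} (hx : 1 ≤ x) (hM : 0 ≤ M) (k : ℕ) :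
    (x + 1) ^ (2 * k) * M ^ 2 ≤ ((9 / 2 * x ^ 3) ^ k * √M) ^ 4 := by
  have hbase : (x + 1) ^ 2 ≤ (9 / 2 * x ^ 3) ^ 4 := by
    have hx12 : x ^ 2 ≤ x ^ 12 := pow_le_pow_right₀ hx (by norm_num)
    nlinarith
  have hsqrt : √M ^ 4 = M ^ 2 := by
    rw [show √M ^ 4 = (√M ^ 2) ^ 2 by ring, Real.sq_sqrt hM]
  rw [mul_pow, ← pow_mul, mul_comm k, pow_mul, pow_mul, hsqrt]
  gcongr

theorem stmt_13_general {n : ℕ} (r : ℕ) [NeZero r]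
    (f : (Fin n → Fin r) → ℝ) (k : ℕ) :
    Lnorm 4 (fun x => ∑ S ∈ Finset.univ.filter fun S => suppCard S ≤ k,
        fhat (fun y => (f y : ℂ)) S * uS S x) ≤
      ((9 / 2) * (r : ℝ) ^ 3) ^ k *
        Real.sqrt (∑ S ∈ Finset.univ.filter fun S => suppCard S ≤ k,
          ‖fhat (fun y => (f y : ℂ)) S‖ ^ 2) := by
  set a : (Fin n → Fin r) → ℂ := fun S => if suppCard S ≤ k then fhat (fun y => (f y : ℂ)) S else 0
  have hg : (fun x => ∑ S ∈ univ.filter fun S => suppCard S ≤ k,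
      fhat (fun y => (f y : ℂ)) S * uS S x) = fun x => ∑ S, a S * uS S x := by
    funext x
    simp only [sum_filter, a, ite_mul, zero_mul]
  have hM : ∑ S ∈ univ.filter (fun S => suppCard S ≤ k), ‖fhat (fun y => (f y : ℂ)) S‖ ^ 2 =
      ∑ S, ‖a S‖ ^ 2 := by
    simp [sum_filter, a, apply_ite (fun z : ℂ => ‖z‖ ^ 2)]
  have ha : ∀ S, a S ≠ 0 → #(coordSupport S) ≤ k := fun S h => by
    by_contra hk
    exact h (if_neg hk)
  have hr : (1 : ℝ) ≤ r := by exact_mod_cast NeZero.one_le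
  have hM0 : 0 ≤ ∑ S, ‖a S‖ ^ 2 := sum_nonneg fun _ _ => by positivity
  rw [hg, hM]
  have key := (sum_norm_sum_mul_uS_pow_four_le a ha).trans
    (mul_le_mul_of_nonneg_left (add_one_pow_mul_sq_le hr hM0 k) (by positivity))
  exact_mod_cast Lnorm_le_of_sum_pow_le four_ne_zero (by positivity) _ key

theorem stmt_13 {n : ℕ} (r : ℕ) [NeZero r] (hr : 2 ≤ r)
    (f : (Fin n → Fin r) → ℝ) (k : ℕ) (hk1 : 1 ≤ k) (hkn : k ≤ n) :
    Lnorm 4 (fun x => ∑ S ∈ Finset.univ.filter fun S => suppCard S ≤ k,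
        fhat (fun y => (f y : ℂ)) S * uS S x) ≤
      ((9 / 2) * (r : ℝ) ^ 3) ^ k *
        Real.sqrt (∑ S ∈ Finset.univ.filter fun S => suppCard S ≤ k,
          ‖fhat (fun y => (f y : ℂ)) S‖ ^ 2) :=
  stmt_13_general r f k
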